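/- arXiv:1502.06446 — 2 statements merged into one kernel-verified Lean document; each statement's English description precedes it below -/
import Mathlib

section
/- Let φ : ℝ₊ → ℝ₊ be continuous, with φ(x) > 0 for all x > 0, and suppose ∫₀^∞ exp(−(1/q) ∫₀^x φ(y) dy) dx < ∞ for some q > 0. Then the map Ψ(p) = ∫₀^∞ exp(−(1/p) ∫₀^x φ(y) dy) dx is strictly increasing on (0, q], continuous, and satisfies Ψ(p) → 0 as p → 0⁺. Consequently, if additionally Ψ(q) ≥ 1, there exists a unique p ∈ (0, q] with Ψ(p) = 1. -/
open MeasureTheory Filter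

/-- The total mass `Ψ(p) = ∫₀^∞ exp(−(1/p)∫₀^x φ(y) dy) dx` of the
unnormalized invariant density. -/
noncomputable def Psi (φ : ℝ → ℝ) (p : ℝ) : ℝ :=
  ∫ x in Set.Ioi (0 : ℝ), Real.exp (-(1 / p) * ∫ y in (0:ℝ)..x, φ y)

/-- `Ψ` is strictly increasing and continuous on `(0, q]`,
tends to `0` as `p → 0⁺`, and if moreover `Ψ(q) ≥ 1` there is a unique
`p ∈ (0, q]` with `Ψ(p) = 1`. -/
theorem Psi_strictMono_continuous_unique_root
    (φ : ℝ → ℝ) (q : ℝ) (hq : 0 < q)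
    (hφ_cont : ContinuousOn φ (Set.Ici 0))
    (hφ_nonneg : ∀ x ≥ (0 : ℝ), 0 ≤ φ x)
    (hφ_pos : ∀ x > (0 : ℝ), 0 < φ x)
    (hint : IntegrableOn (fun x => Real.exp (-(1 / q) * ∫ y in (0:ℝ)..x, φ y))
      (Set.Ioi (0 : ℝ))) :
    StrictMonoOn (Psi φ) (Set.Ioc 0 q) ∧
    ContinuousOn (Psi φ) (Set.Ioc 0 q) ∧
    Tendsto (Psi φ) (nhdsWithin 0 (Set.Ioi 0)) (nhds 0) ∧
    (1 ≤ Psi φ q → ∃! p : ℝ, p ∈ Set.Ioc 0 q ∧ Psi φ p = 1) := by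
  set F : ℝ → ℝ := fun x => ∫ y in (0:ℝ)..x, φ y with hFdef
  -- interval integrability of φ
  have hφ_ii : ∀ x ≥ (0:ℝ), IntervalIntegrable φ volume 0 x := by
    intro x hx
    exact ContinuousOn.intervalIntegrable_of_Icc hx
      (hφ_cont.mono (fun y hy => hy.1))
  -- F is nonneg on [0,∞), positive on (0,∞)
  have hF_nonneg : ∀ x ≥ (0:ℝ), 0 ≤ F x := by
    intro x hx
    exact intervalIntegral.integral_nonneg hx (fun y hy => hφ_nonneg y hy.1)
  have hF_pos : ∀ x > (0:ℝ), 0 < F x := by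
    intro x hx
    exact intervalIntegral.intervalIntegral_pos_of_pos_on (hφ_ii x hx.le)
      (fun y hy => hφ_pos y hy.1) hx
  -- F is continuous on [0,∞)
  have hF_cont : ContinuousOn F (Set.Ici 0) := by
    intro x hx
    have h1 : ContinuousOn F (Set.uIcc 0 (x+1)) := by
      apply intervalIntegral.continuousOn_primitive_interval
      rw [Set.uIcc_of_le (by linarith [hx.out] : (0:ℝ) ≤ x + 1)]
      exact (hφ_cont.mono (fun y hy => hy.1)).integrableOn_compact isCompact_Icc
    have h2 : ContinuousWithinAt F (Set.uIcc 0 (x+1)) x := by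
      apply h1
      rw [Set.uIcc_of_le (by linarith [hx.out] : (0:ℝ) ≤ x + 1)]
      exact ⟨hx, by linarith⟩
    apply h2.mono_of_mem_nhdsWithin
    rw [Set.uIcc_of_le (by linarith [hx.out] : (0:ℝ) ≤ x + 1)]
    exact mem_nhdsWithin.2 ⟨Set.Iio (x+1), isOpen_Iio,
      Set.mem_Iio.2 (by linarith [hx.out]),
      fun y hy => ⟨hy.2, hy.1.out.le⟩⟩
  -- measurability of the integrand
  have hmeas : ∀ p : ℝ, AEStronglyMeasurable
      (fun x => Real.exp (-(1 / p) * F x)) (volume.restrict (Set.Ioi 0)) := by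
    intro p
    have : ContinuousOn (fun x => Real.exp (-(1 / p) * F x)) (Set.Ici 0) :=
      Real.continuous_exp.comp_continuousOn ((continuousOn_const).mul hF_cont)
    exact ((this.mono Set.Ioi_subset_Ici_self).aestronglyMeasurable
      measurableSet_Ioi)
  -- the bound
  have hbound : ∀ p ∈ Set.Ioc (0:ℝ) q, ∀ x ∈ Set.Ioi (0:ℝ),
      Real.exp (-(1 / p) * F x) ≤ Real.exp (-(1 / q) * F x) := by
    intro p hp x hx
    apply Real.exp_le_exp.2
    have h1 : (1:ℝ)/q ≤ 1/p := one_div_le_one_div_of_le hp.1 hp.2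
    have h2 : 0 ≤ F x := hF_nonneg x (le_of_lt hx)
    nlinarith
  have hbound_ae : ∀ p ∈ Set.Ioc (0:ℝ) q,
      ∀ᵐ x ∂(volume.restrict (Set.Ioi (0:ℝ))),
      ‖Real.exp (-(1 / p) * F x)‖ ≤ Real.exp (-(1 / q) * F x) := by
    intro p hp
    filter_upwards [ae_restrict_mem measurableSet_Ioi] with x hx
    rw [Real.norm_eq_abs, abs_of_pos (Real.exp_pos _)]
    exact hbound p hp x hx
  -- integrability for every p ∈ (0,q]
  have hintp : ∀ p ∈ Set.Ioc (0:ℝ) q,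
      IntegrableOn (fun x => Real.exp (-(1 / p) * F x)) (Set.Ioi 0) := by
    intro p hp
    exact hint.mono' (hmeas p) (hbound_ae p hp)
  -- strict monotonicity
  have hmono : StrictMonoOn (Psi φ) (Set.Ioc 0 q) := by
    intro p hp p' hp' hlt
    have hdiff_pos : 0 < ∫ x in Set.Ioi (0:ℝ),
        (Real.exp (-(1 / p') * F x) - Real.exp (-(1 / p) * F x)) := by
      have hnn : 0 ≤ᶠ[ae (volume.restrict (Set.Ioi (0:ℝ)))]
          fun x => Real.exp (-(1 / p') * F x) - Real.exp (-(1 / p) * F x) := by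
        filter_upwards [ae_restrict_mem measurableSet_Ioi] with x hx
        have h1 : (1:ℝ)/p' ≤ 1/p := one_div_le_one_div_of_le hp.1 hlt.le
        have h2 : 0 ≤ F x := hF_nonneg x (le_of_lt hx)
        have := Real.exp_le_exp.2 (by nlinarith : -(1/p) * F x ≤ -(1/p') * F x)
        simp only [Pi.zero_apply]
        linarith
      have hii : IntegrableOn
          (fun x => Real.exp (-(1 / p') * F x) - Real.exp (-(1 / p) * F x))
          (Set.Ioi 0) := (hintp p' hp').sub (hintp p hp)
      rw [setIntegral_pos_iff_support_of_nonneg_ae hnn hii]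
      have hsub : Set.Ioi (0:ℝ) ⊆ Function.support
          (fun x => Real.exp (-(1 / p') * F x) - Real.exp (-(1 / p) * F x))
          ∩ Set.Ioi 0 := by
        intro x hx
        refine ⟨?_, hx⟩
        have h1 : (1:ℝ)/p' < 1/p := one_div_lt_one_div_of_lt hp.1 hlt
        have h2 : 0 < F x := hF_pos x hx
        have := Real.exp_lt_exp.2 (by nlinarith : -(1/p) * F x < -(1/p') * F x)
        simp only [Function.mem_support]
        intro h; linarith [sub_eq_zero.mp h ▸ this]
      calc (0:ENNReal) < volume (Set.Ioi (0:ℝ)) := by simp [Real.volume_Ioi]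
        _ ≤ _ := measure_mono hsub
    have := integral_sub (hintp p' hp') (hintp p hp)
    have heq : ∫ x in Set.Ioi (0:ℝ),
        (Real.exp (-(1 / p') * F x) - Real.exp (-(1 / p) * F x))
        = Psi φ p' - Psi φ p := this
    simp only [Psi]
    linarith [heq ▸ hdiff_pos]
  -- continuity
  have hcont : ContinuousOn (Psi φ) (Set.Ioc 0 q) := by
    have : ContinuousOn (fun p => ∫ x, Real.exp (-(1 / p) * F x)
        ∂(volume.restrict (Set.Ioi (0:ℝ)))) (Set.Ioc 0 q) := by
      apply continuousOn_of_dominated (fun p hp => hmeas p)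
        (fun p hp => hbound_ae p hp) hint
      filter_upwards with x
      apply Real.continuous_exp.comp_continuousOn
      apply ContinuousOn.mul _ continuousOn_const
      exact ((continuousOn_const.div continuousOn_id
        (fun p hp => ne_of_gt hp.1)).neg)
    exact this
  -- limit at 0+
  have htend : Tendsto (Psi φ) (nhdsWithin 0 (Set.Ioi 0)) (nhds 0) := by
    have hmem : Set.Ioc (0:ℝ) q ∈ nhdsWithin (0:ℝ) (Set.Ioi 0) :=
      Ioc_mem_nhdsGT_of_mem ⟨le_refl 0, hq⟩
    have h0 : (0:ℝ) = ∫ x, (0:ℝ) ∂(volume.restrict (Set.Ioi (0:ℝ))) := by simp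
    rw [show (nhds (0:ℝ)) = nhds (∫ x, (0:ℝ) ∂(volume.restrict (Set.Ioi (0:ℝ))))
      by rw [← h0]]
    apply tendsto_integral_filter_of_dominated_convergence
      (fun x => Real.exp (-(1 / q) * F x))
      (Eventually.of_forall (fun p => hmeas p))
      (eventually_of_mem hmem (fun p hp => hbound_ae p hp)) hint
    filter_upwards [ae_restrict_mem measurableSet_Ioi] with x hx
    have h1 : Tendsto (fun p : ℝ => 1 / p) (nhdsWithin 0 (Set.Ioi 0)) atTop := by
      simpa [one_div] using (tendsto_inv_nhdsGT_zero :
        Tendsto (fun p : ℝ => p⁻¹) (nhdsWithin 0 (Set.Ioi 0)) atTop)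
    have h2 : Tendsto (fun p : ℝ => (1 / p) * F x)
        (nhdsWithin 0 (Set.Ioi 0)) atTop := h1.atTop_mul_const (hF_pos x hx)
    have h3 : Tendsto (fun p : ℝ => -(1 / p * F x))
        (nhdsWithin 0 (Set.Ioi 0)) atBot := tendsto_neg_atTop_atBot.comp h2
    have h3' : Tendsto (fun p : ℝ => -(1 / p) * F x)
        (nhdsWithin 0 (Set.Ioi 0)) atBot := by
      simp only [neg_mul]; exact h3
    exact Real.tendsto_exp_atBot.comp h3'
  refine ⟨hmono, hcont, htend, ?_⟩
  -- unique root
  intro hΨq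
  have hlt1 : ∀ᶠ p in nhdsWithin (0:ℝ) (Set.Ioi 0), Psi φ p < 1 :=
    htend.eventually (Filter.Tendsto.eventually_lt_const one_pos tendsto_id)
  have hmem : Set.Ioc (0:ℝ) q ∈ nhdsWithin (0:ℝ) (Set.Ioi 0) :=
    Ioc_mem_nhdsGT_of_mem ⟨le_refl 0, hq⟩
  obtain ⟨p₀, hp₀lt, hp₀mem⟩ :=
    (hlt1.and (eventually_of_mem hmem (fun p hp => hp))).exists
  have hcont' : ContinuousOn (Psi φ) (Set.Icc p₀ q) :=
    hcont.mono (fun p hp => ⟨lt_of_lt_of_le hp₀mem.1 hp.1, hp.2⟩)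
  have hIVT := intermediate_value_Icc hp₀mem.2 hcont'
  have h1mem : (1:ℝ) ∈ Set.Icc (Psi φ p₀) (Psi φ q) := ⟨hp₀lt.le, hΨq⟩
  obtain ⟨p, hpmem, hpval⟩ := hIVT h1mem
  have hpIoc : p ∈ Set.Ioc (0:ℝ) q := ⟨lt_of_lt_of_le hp₀mem.1 hpmem.1, hpmem.2⟩
  refine ⟨p, ⟨hpIoc, hpval⟩, ?_⟩
  intro p' ⟨hp'Ioc, hp'val⟩
  exact hmono.injOn hp'Ioc hpIoc (by rw [hpval, hp'val])
end

section
/- Fix p > 0, m > 0, λ > 0 and let φ : ℝ₊ → ℝ₊ be continuous with φ(x) > 0 for x > 0. With g(x) = (p/(p+λm−λx)) exp(−∫₀^x φ(y)/(p+λ(m−y)) dy) for 0 ≤ x < m + p/λ, suppose ∫₀^{m+p/λ} g(x) dx = 1 and ∫₀^{m+p/λ} x g(x) dx = m. Then ∫₀^{m+p/λ} φ(x) g(x) dx = p. -/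
open MeasureTheory Set Filter Topology

/-- if the stationary density
`g(x) = (p/(p+λm−λx)) exp(−∫₀^x φ(y)/(p+λ(m−y)) dy)` on `[0, m+p/λ)`
has total mass `1` and mean `m`, then `∫ φ g = p`. -/
theorem stationary_density_firing_rate
    (p m lam : ℝ) (hp : 0 < p) (hm : 0 < m) (hlam : 0 < lam)
    (φ : ℝ → ℝ) (hφ_cont : ContinuousOn φ (Set.Ici 0))
    (hφ_pos : ∀ x > (0 : ℝ), 0 < φ x)
    (hφ_nonneg : ∀ x ≥ (0 : ℝ), 0 ≤ φ x)
    (g : ℝ → ℝ)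
    (hg : ∀ x, g x = (p / (p + lam * m - lam * x)) *
      Real.exp (-∫ y in (0:ℝ)..x, φ y / (p + lam * (m - y))))
    (hmass : ∫ x in Set.Ico (0 : ℝ) (m + p / lam), g x = 1)
    (hmean : ∫ x in Set.Ico (0 : ℝ) (m + p / lam), x * g x = m) :
    ∫ x in Set.Ico (0 : ℝ) (m + p / lam), φ x * g x = p := by
  obtain ⟨b, hbdef⟩ : ∃ b : ℝ, b = m + p / lam := ⟨_, rfl⟩
  rw [← hbdef] at hmass hmean ⊢
  have hb : 0 < b := by rw [hbdef]; positivity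
  set f : ℝ → ℝ := fun y => φ y / (p + lam * (m - y)) with hfdef
  set I : ℝ → ℝ := fun x => ∫ y in (0:ℝ)..x, f y with hIdef
  set E : ℝ → ℝ := fun x => Real.exp (-I x) with hEdef
  have hV : ∀ x : ℝ, p + lam * (m - x) = lam * (b - x) := by
    intro x
    rw [hbdef]
    field_simp
    ring
  have hVpos : ∀ x : ℝ, x < b → 0 < p + lam * (m - x) := by
    intro x hx; rw [hV]; exact mul_pos hlam (by linarith)
  have hgE : ∀ x, g x = p / (p + lam * (m - x)) * E x := by
    intro x
    have h1 : p + lam * m - lam * x = p + lam * (m - x) := by ring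
    rw [hg, h1]
  -- continuity of f on closed subintervals
  have hfc : ∀ c : ℝ, c < b → ContinuousOn f (Icc 0 c) := by
    intro c hc
    apply ContinuousOn.div
    · exact hφ_cont.mono fun x hx => hx.1
    · fun_prop
    · intro x hx; exact (hVpos x (lt_of_le_of_lt hx.2 hc)).ne'
  have hfnn : ∀ x : ℝ, 0 ≤ x → x < b → 0 ≤ f x := fun x h1 h2 =>
    div_nonneg (hφ_nonneg x h1) (hVpos x h2).le
  have hfint : ∀ c : ℝ, 0 ≤ c → c < b → IntervalIntegrable f volume 0 c := by
    intro c h0 hc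
    exact (hfc c hc).intervalIntegrable_of_Icc h0
  have hfint' : ∀ c c' : ℝ, 0 ≤ c → c ≤ c' → c' < b → IntervalIntegrable f volume c c' := by
    intro c c' h0 h1 h2
    exact ((hfc c' h2).mono (Icc_subset_Icc h0 le_rfl)).intervalIntegrable_of_Icc h1
  have hE0 : E 0 = 1 := by
    simp [hEdef, hIdef]
  have hEpos : ∀ x, 0 < E x := fun x => Real.exp_pos _
  have hEanti : ∀ c c' : ℝ, 0 ≤ c → c ≤ c' → c' < b → E c' ≤ E c := by
    intro c c' h0 h1 h2
    have h3 : I c + ∫ y in c..c', f y = I c' :=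
      intervalIntegral.integral_add_adjacent_intervals
        (hfint c h0 (lt_of_le_of_lt h1 h2)) (hfint' c c' h0 h1 h2)
    have h4 : 0 ≤ ∫ y in c..c', f y :=
      intervalIntegral.integral_nonneg h1
        (fun x hx => hfnn x (le_trans h0 hx.1) (lt_of_le_of_lt hx.2 h2))
    simp only [hEdef]
    exact Real.exp_le_exp.2 (by linarith)
  -- continuity of E on closed subintervals
  have hEcont : ∀ c : ℝ, 0 ≤ c → c < b → ContinuousOn E (Icc 0 c) := by
    intro c h0 hc
    have hInt : IntegrableOn f (uIcc 0 c) := by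
      rw [uIcc_of_le h0]
      exact (hfc c hc).integrableOn_Icc
    have hIc := intervalIntegral.continuousOn_primitive_interval (μ := volume) hInt
    rw [uIcc_of_le h0] at hIc
    exact Real.continuous_exp.comp_continuousOn hIc.neg
  have hgcont : ∀ c : ℝ, 0 ≤ c → c < b → ContinuousOn g (Icc 0 c) := by
    intro c h0 hc
    apply ContinuousOn.congr (f := fun x => p / (p + lam * (m - x)) * E x)
    · apply ContinuousOn.mul
      · apply ContinuousOn.div continuousOn_const (by fun_prop)
        intro x hx; exact (hVpos x (lt_of_le_of_lt hx.2 hc)).ne'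
      · exact hEcont c h0 hc
    · intro x _; exact hgE x
  have hφgcont : ∀ c : ℝ, 0 ≤ c → c < b → ContinuousOn (fun x => φ x * g x) (Icc 0 c) := by
    intro c h0 hc
    exact (hφ_cont.mono fun x hx => hx.1).mul (hgcont c h0 hc)
  -- FTC: the interval integral of φ g
  have hkey1 : ∀ c : ℝ, 0 ≤ c → c < b →
      ∫ x in (0:ℝ)..c, φ x * g x = p * (1 - E c) := by
    intro c h0 hc
    have hconts : ContinuousOn (fun x => -(p * E x)) (Icc 0 c) :=
      ((hEcont c h0 hc).const_smul p).neg
    have hderiv : ∀ x ∈ Ioo (0:ℝ) c, HasDerivAt (fun x => -(p * E x)) (φ x * g x) x := by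
      intro x hx
      have hxb : x < b := lt_trans hx.2 hc
      have hVx := hVpos x hxb
      have hfx : ContinuousAt f x := by
        have h1 : ContinuousAt φ x := hφ_cont.continuousAt (Ici_mem_nhds hx.1)
        have h2 : ContinuousAt (fun y => p + lam * (m - y)) x := by fun_prop
        exact h1.div h2 hVx.ne'
      have hfIoo : ContinuousOn f (Ioo 0 b) := by
        apply ContinuousOn.div
        · exact hφ_cont.mono fun y hy => hy.1.le
        · fun_prop
        · intro y hy; exact (hVpos y hy.2).ne'
      have hIx : HasDerivAt I (f x) x := by
        apply intervalIntegral.integral_hasDerivAt_right (hfint x hx.1.le hxb)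
        · exact ContinuousOn.stronglyMeasurableAtFilter isOpen_Ioo hfIoo x ⟨hx.1, hxb⟩
        · exact hfx
      have hEx : HasDerivAt E (Real.exp (-I x) * (-f x)) x := hIx.neg.exp
      have hF : HasDerivAt (fun x => -(p * E x)) (-(p * (Real.exp (-I x) * (-f x)))) x :=
        (hEx.const_mul p).neg
      convert hF using 1
      rw [hgE x]
      have hfx' : f x = φ x / (p + lam * (m - x)) := rfl
      have hEx' : E x = Real.exp (-I x) := rfl
      rw [← hEx', hfx']
      field_simp
    have hint : IntervalIntegrable (fun x => φ x * g x) volume 0 c :=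
      (hφgcont c h0 hc).intervalIntegrable_of_Icc h0
    rw [intervalIntegral.integral_eq_sub_of_hasDerivAt_of_le h0 hconts hderiv hint, hE0]
    ring
  have hkey : ∀ c : ℝ, 0 ≤ c → c < b →
      ∫ x in Ico (0:ℝ) c, φ x * g x = p * (1 - E c) := by
    intro c h0 hc
    rw [integral_Ico_eq_integral_Ioo, ← integral_Ioc_eq_integral_Ioo,
      ← intervalIntegral.integral_of_le h0]
    exact hkey1 c h0 hc
  -- integrability of g
  have hgint : IntegrableOn g (Ico 0 b) := by
    by_contra h
    rw [MeasureTheory.integral_undef h] at hmass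
    exact zero_ne_one hmass
  have hgnn : ∀ x ∈ Ico (0:ℝ) b, 0 ≤ g x := by
    intro x hx
    rw [hgE x]
    exact mul_nonneg (div_nonneg hp.le (hVpos x hx.2).le) (hEpos x).le
  -- E gets arbitrarily small near b
  have hEsmall : ∀ δ : ℝ, 0 < δ → ∃ c, 0 ≤ c ∧ c < b ∧ E c < δ := by
    intro δ hδ
    by_contra hcon
    push_neg at hcon
    obtain ⟨ε, hεdef⟩ : ∃ ε : ℝ, ε = min (b/2) (b * Real.exp (-(2*lam/(p*δ)))) := ⟨_, rfl⟩
    have hε0 : 0 < ε := by rw [hεdef]; exact lt_min (by positivity) (by positivity)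
    have hεb : ε ≤ b/2 := by rw [hεdef]; exact min_le_left _ _
    obtain ⟨c, hcdef⟩ : ∃ c : ℝ, c = b - ε := ⟨_, rfl⟩
    have h0c : 0 ≤ c := by rw [hcdef]; linarith
    have hcb : c < b := by rw [hcdef]; linarith
    have hbc : b - c = ε := by rw [hcdef]; ring
    -- pointwise bound
    have hpt : ∀ x ∈ Ico (0:ℝ) c, p * δ / (lam * (b - x)) ≤ g x := by
      intro x hx
      have hxb : x < b := lt_trans hx.2 hcb
      have hVx : 0 < lam * (b - x) := mul_pos hlam (by linarith)
      have hEδ : δ ≤ E x := hcon x hx.1 hxb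
      rw [hgE x, hV]
      rw [div_mul_eq_mul_div, div_le_div_iff₀ hVx hVx]
      nlinarith [hVx, mul_le_mul_of_nonneg_left hEδ hp.le]
    -- compute the lower integral
    have hcomp : ∫ x in Ico (0:ℝ) c, p * δ / (lam * (b - x)) =
        p * δ / lam * Real.log (b / ε) := by
      rw [integral_Ico_eq_integral_Ioo, ← integral_Ioc_eq_integral_Ioo,
        ← intervalIntegral.integral_of_le h0c]
      have h1 : ∀ x : ℝ, p * δ / (lam * (b - x)) = (p * δ / lam) * (b - x)⁻¹ := by
        intro x
        rw [← div_eq_mul_inv, div_div]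
      simp_rw [h1]
      rw [intervalIntegral.integral_const_mul]
      have h2 : (∫ x in (0:ℝ)..c, (b - x)⁻¹) = ∫ x in b - c..b - 0, x⁻¹ :=
        intervalIntegral.integral_comp_sub_left (fun x => x⁻¹) b
      rw [h2]
      rw [sub_zero, hbc, integral_inv_of_pos hε0 hb]
    -- the chain of inequalities
    have hint1 : IntegrableOn (fun x => p * δ / (lam * (b - x))) (Ico 0 c) := by
      apply (ContinuousOn.integrableOn_Icc ?_).mono_set Ico_subset_Icc_self
      apply ContinuousOn.div continuousOn_const (by fun_prop)
      intro x hx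
      have : x < b := lt_of_le_of_lt hx.2 hcb
      exact (mul_pos hlam (by linarith)).ne'
    have hint2 : IntegrableOn g (Ico 0 c) :=
      hgint.mono_set (Ico_subset_Ico le_rfl hcb.le)
    have hle1 : ∫ x in Ico (0:ℝ) c, p * δ / (lam * (b - x)) ≤ ∫ x in Ico (0:ℝ) c, g x :=
      setIntegral_mono_on hint1 hint2 measurableSet_Ico hpt
    have hle2 : ∫ x in Ico (0:ℝ) c, g x ≤ ∫ x in Ico (0:ℝ) b, g x := by
      apply setIntegral_mono_set hgint
      · filter_upwards [ae_restrict_mem measurableSet_Ico] with x hx using hgnn x hx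
      · exact HasSubset.Subset.eventuallyLE (Ico_subset_Ico le_rfl hcb.le)
    have hA : p * δ / lam * Real.log (b / ε) ≤ 1 := by
      rw [← hcomp]
      calc ∫ x in Ico (0:ℝ) c, p * δ / (lam * (b - x))
          ≤ ∫ x in Ico (0:ℝ) c, g x := hle1
        _ ≤ ∫ x in Ico (0:ℝ) b, g x := hle2
        _ = 1 := hmass
    -- but log (b/ε) ≥ 2 lam / (p δ)
    have hεle : ε ≤ b * Real.exp (-(2*lam/(p*δ))) := by
      rw [hεdef]; exact min_le_right _ _
    have hlog : 2 * lam / (p * δ) ≤ Real.log (b / ε) := by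
      have h3 : Real.log ε ≤ Real.log (b * Real.exp (-(2*lam/(p*δ)))) :=
        Real.log_le_log hε0 hεle
      rw [Real.log_mul hb.ne' (Real.exp_pos _).ne', Real.log_exp] at h3
      rw [Real.log_div hb.ne' hε0.ne']
      linarith
    have h2le1 : (2:ℝ) ≤ 1 := by
      have hpd : 0 < p * δ / lam := by positivity
      have := mul_le_mul_of_nonneg_left hlog hpd.le
      have heq2 : p * δ / lam * (2 * lam / (p * δ)) = 2 := by field_simp
      calc (2:ℝ) = p * δ / lam * (2 * lam / (p * δ)) := heq2.symm
        _ ≤ p * δ / lam * Real.log (b / ε) := this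
        _ ≤ 1 := hA
    linarith
  -- the exhausting sequence
  set c : ℕ → ℝ := fun n => b - b / (n + 1) with hcdef
  have hc0 : ∀ n, 0 ≤ c n := by
    intro n
    have hn : (0:ℝ) ≤ (n:ℝ) := Nat.cast_nonneg n
    have h1 : b / ((n:ℝ) + 1) ≤ b := div_le_self hb.le (by linarith)
    simp only [hcdef]
    linarith
  have hcb : ∀ n, c n < b := by
    intro n
    have : 0 < b / ((n:ℝ) + 1) := by positivity
    simp only [hcdef]; linarith
  have hlt : ∀ x : ℝ, x < b → ∀ n : ℕ, b / (b - x) < n → x < c n := by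
    intro x hxb n hn
    have hbx : 0 < b - x := by linarith
    have h1 : b / (b - x) < (n:ℝ) + 1 := hn.trans (by linarith)
    have h2 : b < ((n:ℝ) + 1) * (b - x) := by rwa [div_lt_iff₀ hbx] at h1
    have h3 : b / ((n:ℝ) + 1) < b - x := by
      rw [div_lt_iff₀ (by positivity)]
      nlinarith
    simp only [hcdef]; linarith
  have hmono : Monotone fun n : ℕ => Ico (0:ℝ) (c n) := by
    intro i j hij
    apply Ico_subset_Ico le_rfl
    apply sub_le_sub_left
    apply div_le_div_of_nonneg_left hb.le (by positivity)
    have h2 : (i:ℝ) ≤ (j:ℝ) := by exact_mod_cast hij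
    linarith
  have hUnion : (⋃ n : ℕ, Ico (0:ℝ) (c n)) = Ico (0:ℝ) b := by
    ext x
    simp only [mem_iUnion, mem_Ico]
    constructor
    · rintro ⟨n, h1, h2⟩
      exact ⟨h1, h2.trans (hcb n)⟩
    · rintro ⟨h1, h2⟩
      obtain ⟨n, hn⟩ := exists_nat_gt (b / (b - x))
      exact ⟨n, h1, hlt x h2 n hn⟩
  -- continuity, hence measurability, of φ g on the half-open interval
  have hφgIco : ContinuousOn (fun x => φ x * g x) (Ico 0 b) := by
    intro x hx
    obtain ⟨d, hddef⟩ : ∃ d : ℝ, d = (x + b) / 2 := ⟨_, rfl⟩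
    have hxd : x < d := by rw [hddef]; linarith [hx.2]
    have hdb : d < b := by rw [hddef]; linarith [hx.2]
    have h0d : 0 ≤ d := by rw [hddef]; linarith [hx.1]
    have h1 : ContinuousWithinAt (fun x => φ x * g x) (Icc 0 d) x :=
      (hφgcont d h0d hdb) x ⟨hx.1, hxd.le⟩
    apply h1.mono_of_mem_nhdsWithin
    apply mem_nhdsWithin.mpr
    refine ⟨Iio d, isOpen_Iio, hxd, ?_⟩
    rintro y ⟨hy1, hy2⟩
    exact ⟨hy2.1, hy1.le⟩
  -- integrability of φ g on [0, b)
  have hφgint : IntegrableOn (fun x => φ x * g x) (Ico 0 b) := by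
    obtain ⟨C, hC⟩ := (isCompact_Icc (a := (0:ℝ)) (b := b)).exists_bound_of_continuousOn
      (hφ_cont.mono (fun y hy => hy.1))
    apply Integrable.mono' (hgint.const_mul C)
      (hφgIco.aestronglyMeasurable measurableSet_Ico)
    filter_upwards [ae_restrict_mem measurableSet_Ico] with x hx
    rw [norm_mul]
    calc ‖φ x‖ * ‖g x‖ ≤ C * ‖g x‖ :=
          mul_le_mul_of_nonneg_right (hC x ⟨hx.1, hx.2.le⟩) (norm_nonneg _)
      _ = C * g x := by rw [Real.norm_of_nonneg (hgnn x hx)]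
  -- limits
  have htend1 : Tendsto (fun n => ∫ x in Ico (0:ℝ) (c n), φ x * g x) atTop
      (𝓝 (∫ x in Ico (0:ℝ) b, φ x * g x)) := by
    have h := tendsto_setIntegral_of_monotone (fun n : ℕ => measurableSet_Ico) hmono
      (by rw [hUnion]; exact hφgint)
    rwa [hUnion] at h
  have hEtend : Tendsto (fun n => E (c n)) atTop (𝓝 0) := by
    rw [Metric.tendsto_atTop]
    intro δ hδ
    obtain ⟨c₀, h1, h2, h3⟩ := hEsmall δ hδ
    obtain ⟨N, hN⟩ := exists_nat_gt (b / (b - c₀))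
    refine ⟨N, fun n hn => ?_⟩
    have hNn : b / (b - c₀) < (n:ℝ) := lt_of_lt_of_le hN (by exact_mod_cast hn)
    have hcn : c₀ < c n := hlt c₀ h2 n hNn
    have hle : E (c n) ≤ E c₀ := hEanti c₀ (c n) h1 hcn.le (hcb n)
    rw [Real.dist_eq, sub_zero, abs_of_pos (hEpos _)]
    exact lt_of_le_of_lt hle h3
  have htend2 : Tendsto (fun n => p * (1 - E (c n))) atTop (𝓝 p) := by
    have h := (tendsto_const_nhds (x := (1:ℝ)) (f := atTop (α := ℕ))).sub hEtend
    have h2 := h.const_mul p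
    simpa using h2
  have htend1' : Tendsto (fun n => p * (1 - E (c n))) atTop
      (𝓝 (∫ x in Ico (0:ℝ) b, φ x * g x)) := by
    have heq : (fun n => ∫ x in Ico (0:ℝ) (c n), φ x * g x) =
        fun n => p * (1 - E (c n)) := by
      funext n
      exact hkey (c n) (hc0 n) (hcb n)
    rwa [heq] at htend1
  exact tendsto_nhds_unique htend1' htend2
end
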